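/- arXiv:1910.07279 — 2 statements merged into one kernel-verified Lean document; each statement's English description precedes it below -/
import Mathlib

section
/- Suppose {νₙ} is a sequence of Borel probability measures on X, Φ = {log φₙ} a subadditive potential, and μₙ = (1/n) Σ_{i=0}^{n-1} νₙ ∘ T^{-i}. If μ_{nᵢ} converges weakly-* to μ along a subsequence nᵢ, then μ is T-invariant and limsup_{i→∞} (1/nᵢ) ∫ log φ_{nᵢ} dν_{nᵢ} ≤ χ(μ,Φ). -/
open MeasureTheory Filter Topology Set
open scoped ENNReal NNReal

/-- Positive part of an extended real, as an extended nonnegative real. -/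
noncomputable def EReal.posPart (a : EReal) : ℝ≥0∞ :=
  if a = ⊤ then ⊤ else ENNReal.ofReal a.toReal

/-- `EReal`-valued logarithm of a real number: `elog r = -∞` for `r ≤ 0`. -/
noncomputable def elog (r : ℝ) : EReal := ENNReal.log (ENNReal.ofReal r)

/-- The integral of an `EReal`-valued function, with values in `[-∞, ∞]`. -/
noncomputable def eint {X : Type*} [MeasurableSpace X] (μ : Measure X) (f : X → EReal) : EReal :=
  ((∫⁻ x, (f x).posPart ∂μ : ℝ≥0∞) : EReal) - ((∫⁻ x, (-f x).posPart ∂μ : ℝ≥0∞) : EReal)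

/-- `Φ = {log φₙ}` is a subadditive potential for `T`: each `φₙ` is continuous,
nonnegative, and `φ_{n+m}(x) ≤ φₙ(x) · φₘ(Tⁿ x)`. -/
def SubadditivePotential {X : Type*} [TopologicalSpace X] (T : X → X) (φ : ℕ → X → ℝ) : Prop :=
  (∀ n, 1 ≤ n → Continuous (φ n)) ∧ (∀ n x, 1 ≤ n → 0 ≤ φ n x) ∧
    (∀ m n : ℕ, 1 ≤ m → 1 ≤ n → ∀ x, φ (n + m) x ≤ φ n x * φ m (T^[n] x))

/-!
Invariance: against `μₙ = (1/n) Σ_{j<n} T^j_* νₙ` the integrals of `f ∘ T` and `f` differ by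
`(1/n) ∫ (f ∘ Tⁿ - f) dνₙ = O(1/n)`, so every weak-* limit is `T`-invariant.

Upper bound: fix `m` and `ε > 0` (the `ε` keeps the logarithms finite where `φₘ` vanishes), and
let `M ≥ max 1 (sup φ₁)`. For each offset `l < m`, cut `[0, n)` into `[0, l)`, the blocks
`[l + jm, l + (j+1)m)` for `j < k`, and a tail, where `k` does not depend on `l` and the two end
pieces have total length `≤ 2m`. Submultiplicativity gives
`φₙ(x) ≤ M^{2m} ∏_{j<k} (φₘ + ε)(T^{l+jm} x)`. Over all `l` the blocks cover `[0, km)` exactly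
once, so averaging the logarithms yields
`log φₙ ≤ (1/m) Σ_{i<n} log (φₘ + ε) ∘ Tⁱ + C(m, ε)`. Integrating against `νₙ` and dividing by `n`
bounds `(1/n) ∫ log φₙ dνₙ` by `(1/m) ∫ log (φₘ + ε) dμₙ + C/n`, which converges along `nᵢ`.
Finally let `ε ↓ 0` (monotone convergence) and `m → ∞`.
-/

theorem continuous_elog : Continuous elog :=
  ENNReal.continuous_log.comp ENNReal.continuous_ofReal

theorem elog_mono : Monotone elog :=
  ENNReal.log_monotone.comp fun _ _ => ENNReal.ofReal_le_ofReal

theorem elog_of_pos {r : ℝ} (hr : 0 < r) : elog r = Real.log r :=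
  ENNReal.log_ofReal_of_pos hr

theorem elog_of_nonpos {r : ℝ} (hr : r ≤ 0) : elog r = ⊥ := by
  simp [elog, ENNReal.ofReal_eq_zero.2 hr]

theorem toENNReal_elog_le (r : ℝ) : (elog r).toENNReal ≤ ENNReal.ofReal r := by
  rcases le_or_gt r 0 with hr | hr
  · simp [elog_of_nonpos hr]
  · rw [elog_of_pos hr, EReal.real_coe_toENNReal]
    exact ENNReal.ofReal_le_ofReal (Real.log_le_self hr.le)

section eint

variable {X : Type*} [MeasurableSpace X] {μ : Measure X}

-- `EReal.posPart` is definitionally Mathlib's `EReal.toENNReal`.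
theorem eint_eq_sub (f : X → EReal) :
    eint μ f = ((∫⁻ x, (f x).toENNReal ∂μ : ℝ≥0∞) : EReal)
      - ((∫⁻ x, (-f x).toENNReal ∂μ : ℝ≥0∞) : EReal) := rfl

theorem eint_mono {f g : X → EReal} (h : ∀ x, f x ≤ g x) : eint μ f ≤ eint μ g := by
  simp only [eint_eq_sub]
  refine EReal.sub_le_sub ?_ ?_ <;> refine EReal.coe_ennreal_le_coe_ennreal_iff.2 <|
    lintegral_mono fun x => EReal.toENNReal_le_toENNReal ?_
  exacts [h x, EReal.neg_le_neg_iff.2 (h x)]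

theorem eint_coe {g : X → ℝ} (hg : Integrable g μ) :
    eint μ (fun x => (g x : EReal)) = ((∫ x, g x ∂μ : ℝ) : EReal) := by
  have hneg : ∫⁻ x, ENNReal.ofReal (-g x) ∂μ ≠ ∞ := hg.neg.lintegral_lt_top.ne
  rw [integral_eq_lintegral_pos_part_sub_lintegral_neg_part hg, EReal.coe_sub,
    EReal.coe_ennreal_toReal hg.lintegral_lt_top.ne, EReal.coe_ennreal_toReal hneg]
  rfl

theorem tendsto_eint_of_antitone {f : ℕ → X → EReal} {F : X → EReal}
    (hf : ∀ n, AEMeasurable (f n) μ) (h_anti : Antitone f)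
    (h0 : ∫⁻ x, (f 0 x).toENNReal ∂μ ≠ ∞)
    (h_tendsto : ∀ x, Tendsto (fun n => f n x) atTop (𝓝 (F x))) :
    Tendsto (fun n => eint μ (f n)) atTop (𝓝 (eint μ F)) := by
  have hpos : Tendsto (fun n => ∫⁻ x, (f n x).toENNReal ∂μ) atTop
      (𝓝 (∫⁻ x, (F x).toENNReal ∂μ)) :=
    lintegral_tendsto_of_tendsto_of_antitone (fun n => (hf n).ereal_toENNReal)
      (ae_of_all _ fun x _ _ hij => EReal.toENNReal_le_toENNReal (h_anti hij x)) h0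
      (ae_of_all _ fun x => (EReal.continuous_toENNReal.tendsto _).comp (h_tendsto x))
  have hneg : Tendsto (fun n => ∫⁻ x, (-f n x).toENNReal ∂μ) atTop
      (𝓝 (∫⁻ x, (-F x).toENNReal ∂μ)) :=
    lintegral_tendsto_of_tendsto_of_monotone (fun n => (hf n).neg.ereal_toENNReal)
      (ae_of_all _ fun x _ _ hij => EReal.toENNReal_le_toENNReal
        (EReal.neg_le_neg_iff.2 (h_anti hij x)))
      (ae_of_all _ fun x => (EReal.continuous_toENNReal.tendsto _).comp (h_tendsto x).neg)
  have hF : ∫⁻ x, (F x).toENNReal ∂μ ≠ ∞ := ne_top_of_le_ne_top h0 <| lintegral_mono fun x =>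
    EReal.toENNReal_le_toENNReal <| le_of_tendsto' (h_tendsto x) fun n => h_anti (Nat.zero_le n) x
  simp only [eint_eq_sub, sub_eq_add_neg]
  refine (EReal.continuousAt_add (Or.inl ?_) (Or.inl ?_)).tendsto.comp
    ((EReal.tendsto_coe_ennreal.2 hpos).prodMk_nhds (EReal.tendsto_coe_ennreal.2 hneg).neg)
  · simpa using hF
  · exact (EReal.bot_lt_coe_ennreal _).ne'

theorem tendsto_eint_elog_add [IsFiniteMeasure μ] {f : X → ℝ} (hf : Integrable f μ)
    {ε : ℕ → ℝ} (hε : Antitone ε) (hε0 : Tendsto ε atTop (𝓝 0)) :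
    Tendsto (fun n => eint μ (fun x => elog (f x + ε n))) atTop
      (𝓝 (eint μ (fun x => elog (f x)))) := by
  refine tendsto_eint_of_antitone
    (fun n => continuous_elog.measurable.comp_aemeasurable (hf.aemeasurable.add_const _))
    (fun i j hij x => elog_mono (add_le_add_right (hε hij) _)) ?_ fun x => ?_
  · exact ne_top_of_le_ne_top ((hf.add (integrable_const (ε 0))).lintegral_lt_top.ne)
      (lintegral_mono fun x => toENNReal_elog_le _)
  · have h := (tendsto_const_nhds (x := f x)).add hε0
    rw [add_zero] at h
    exact (continuous_elog.tendsto _).comp h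

end eint

open Finset in
theorem Finset.prod_range_mul_eq_prod_prod {M : Type*} [CommMonoid M] (f : ℕ → M) (k m : ℕ) :
    ∏ i ∈ range (k * m), f i = ∏ l ∈ range m, ∏ j ∈ range k, f (l + j * m) := by
  induction k with
  | zero => simp
  | succ k ih =>
    rw [Nat.succ_mul, prod_range_add, ih, ← prod_mul_distrib]
    exact prod_congr rfl fun l _ => by rw [prod_range_succ, add_comm l]

theorem Nat.exists_mul_add_le_and_le_mul_add {m n : ℕ} (hm : 0 < m) (hmn : m ≤ n) :
    ∃ k, k * m + m ≤ n ∧ n ≤ k * m + 2 * m := by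
  obtain ⟨k, hk⟩ : ∃ k, n / m = k + 1 := ⟨n / m - 1, by have := Nat.div_pos hmn hm; omega⟩
  have hle := Nat.div_mul_le_self n m
  have hlt := Nat.lt_div_mul_add (a := n) hm
  rw [hk, Nat.succ_mul] at hle hlt
  exact ⟨k, hle, by omega⟩

section Submultiplicative

open Finset

variable {X : Type*} {T : X → X} {φ : ℕ → X → ℝ} {M : ℝ}

theorem le_pow_of_submultiplicative
    (hsub : ∀ m n : ℕ, 1 ≤ m → 1 ≤ n → ∀ x, φ (n + m) x ≤ φ n x * φ m (T^[n] x))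
    (hnn : ∀ n x, 1 ≤ n → 0 ≤ φ n x) (hM : ∀ x, φ 1 x ≤ M) {q : ℕ} (hq : 1 ≤ q) (x : X) :
    φ q x ≤ M ^ q := by
  induction q, hq using Nat.le_induction generalizing x with
  | base => simpa using hM x
  | succ q hq ih =>
    calc φ (q + 1) x ≤ φ q x * φ 1 (T^[q] x) := hsub 1 q le_rfl hq x
      _ ≤ M ^ q * M := mul_le_mul (ih x) (hM _) (hnn 1 _ le_rfl) ((hnn q x hq).trans (ih x))
      _ = M ^ (q + 1) := (pow_succ M q).symm

theorem le_pow_mul_apply_iterate_of_submultiplicative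
    (hsub : ∀ m n : ℕ, 1 ≤ m → 1 ≤ n → ∀ x, φ (n + m) x ≤ φ n x * φ m (T^[n] x))
    (hnn : ∀ n x, 1 ≤ n → 0 ≤ φ n x) (hM : ∀ x, φ 1 x ≤ M) (l : ℕ) {p : ℕ} (hp : 1 ≤ p)
    (x : X) : φ (l + p) x ≤ M ^ l * φ p (T^[l] x) := by
  rcases Nat.eq_zero_or_pos l with rfl | hl
  · simp
  calc φ (l + p) x ≤ φ l x * φ p (T^[l] x) := hsub p l hp hl x
    _ ≤ M ^ l * φ p (T^[l] x) :=
      mul_le_mul_of_nonneg_right (le_pow_of_submultiplicative hsub hnn hM hl x) (hnn p _ hp)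

theorem le_prod_mul_pow_of_submultiplicative
    (hsub : ∀ m n : ℕ, 1 ≤ m → 1 ≤ n → ∀ x, φ (n + m) x ≤ φ n x * φ m (T^[n] x))
    (hnn : ∀ n x, 1 ≤ n → 0 ≤ φ n x) (hM : ∀ x, φ 1 x ≤ M) {m q : ℕ} (hm : 1 ≤ m)
    (hq : 1 ≤ q) (k : ℕ) (x : X) :
    φ (k * m + q) x ≤ (∏ j ∈ range k, φ m (T^[j * m] x)) * M ^ q := by
  induction k generalizing x with
  | zero => simpa using le_pow_of_submultiplicative hsub hnn hM hq x
  | succ k ih =>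
    calc φ ((k + 1) * m + q) x = φ (m + (k * m + q)) x := by rw [Nat.succ_mul]; ring_nf
      _ ≤ φ m x * φ (k * m + q) (T^[m] x) := hsub _ m (by omega) hm x
      _ ≤ φ m x * ((∏ j ∈ range k, φ m (T^[j * m] (T^[m] x))) * M ^ q) :=
        mul_le_mul_of_nonneg_left (ih _) (hnn m x hm)
      _ = (∏ j ∈ range (k + 1), φ m (T^[j * m] x)) * M ^ q := by
        simp only [prod_range_succ', ← Function.iterate_add_apply, ← Nat.succ_mul, zero_mul,
          Function.iterate_zero_apply]
        ring

theorem le_pow_mul_prod_of_submultiplicative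
    (hsub : ∀ m n : ℕ, 1 ≤ m → 1 ≤ n → ∀ x, φ (n + m) x ≤ φ n x * φ m (T^[n] x))
    (hnn : ∀ n x, 1 ≤ n → 0 ≤ φ n x) (hM : ∀ x, φ 1 x ≤ M) {m q : ℕ} (hm : 1 ≤ m)
    (hq : 1 ≤ q) {ψ : X → ℝ} (hψ : ∀ y, φ m y ≤ ψ y) (l k : ℕ) (x : X) :
    φ (l + k * m + q) x ≤ M ^ (l + q) * ∏ j ∈ range k, ψ (T^[l + j * m] x) := by
  have hM0 : 0 ≤ M := (hnn 1 x le_rfl).trans (hM x)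
  calc φ (l + k * m + q) x = φ (l + (k * m + q)) x := by rw [add_assoc]
    _ ≤ M ^ l * φ (k * m + q) (T^[l] x) :=
      le_pow_mul_apply_iterate_of_submultiplicative hsub hnn hM l (by omega) x
    _ ≤ M ^ l * ((∏ j ∈ range k, φ m (T^[j * m] (T^[l] x))) * M ^ q) :=
      mul_le_mul_of_nonneg_left (le_prod_mul_pow_of_submultiplicative hsub hnn hM hm hq k _)
        (pow_nonneg hM0 l)
    _ ≤ M ^ l * ((∏ j ∈ range k, ψ (T^[l + j * m] x)) * M ^ q) := by
      simp only [← Function.iterate_add_apply, add_comm _ l]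
      gcongr
      · exact fun j _ => hnn m _ hm
      · exact hψ _
    _ = M ^ (l + q) * ∏ j ∈ range k, ψ (T^[l + j * m] x) := by ring

theorem pow_le_pow_mul_prod_of_submultiplicative
    (hsub : ∀ m n : ℕ, 1 ≤ m → 1 ≤ n → ∀ x, φ (n + m) x ≤ φ n x * φ m (T^[n] x))
    (hnn : ∀ n x, 1 ≤ n → 0 ≤ φ n x) (hM : ∀ x, φ 1 x ≤ M) (hM1 : 1 ≤ M) {m n k : ℕ}
    (hm : 1 ≤ m) (hkn : k * m + m ≤ n) (hnk : n ≤ k * m + 2 * m) {ψ : X → ℝ}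
    (hψ : ∀ y, φ m y ≤ ψ y) (x : X) :
    φ n x ^ m ≤ M ^ (2 * m * m) * ∏ i ∈ range (k * m), ψ (T^[i] x) := by
  have hψ0 : ∀ y, 0 ≤ ψ y := fun y => (hnn m y hm).trans (hψ y)
  have hblock : ∀ l ∈ range m, φ n x ≤ M ^ (2 * m) * ∏ j ∈ range k, ψ (T^[l + j * m] x) := by
    intro l hl
    have hlm := mem_range.1 hl
    calc φ n x = φ (l + k * m + (n - l - k * m)) x := by congr; omega
      _ ≤ M ^ (l + (n - l - k * m)) * ∏ j ∈ range k, ψ (T^[l + j * m] x) :=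
        le_pow_mul_prod_of_submultiplicative hsub hnn hM hm (by omega) hψ l k x
      _ ≤ M ^ (2 * m) * ∏ j ∈ range k, ψ (T^[l + j * m] x) :=
        mul_le_mul_of_nonneg_right (pow_le_pow_right₀ hM1 (by omega))
          (prod_nonneg fun j _ => hψ0 _)
  calc φ n x ^ m = ∏ l ∈ range m, φ n x := by rw [prod_const, card_range]
    _ ≤ ∏ l ∈ range m, M ^ (2 * m) * ∏ j ∈ range k, ψ (T^[l + j * m] x) :=
      prod_le_prod (fun _ _ => hnn n x (by omega)) hblock
    _ = M ^ (2 * m * m) * ∏ i ∈ range (k * m), ψ (T^[i] x) := by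
      rw [prod_mul_distrib, prod_const, card_range, ← pow_mul,
        prod_range_mul_eq_prod_prod (fun i => ψ (T^[i] x))]

theorem elog_le_birkhoffSum_log_add
    (hsub : ∀ m n : ℕ, 1 ≤ m → 1 ≤ n → ∀ x, φ (n + m) x ≤ φ n x * φ m (T^[n] x))
    (hnn : ∀ n x, 1 ≤ n → 0 ≤ φ n x) (hM : ∀ x, φ 1 x ≤ M) (hM1 : 1 ≤ M) {m n : ℕ}
    (hm : 1 ≤ m) (hmn : m ≤ n) {ε : ℝ} (hε : 0 < ε) (x : X) :
    elog (φ n x) ≤ ((birkhoffSum T (fun y => Real.log (φ m y + ε)) n x / m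
      + (2 * m * Real.log M + 2 * |Real.log ε|) : ℝ) : EReal) := by
  rcases le_or_gt (φ n x) 0 with hx | hx
  · simp [elog_of_nonpos hx]
  rw [elog_of_pos hx, EReal.coe_le_coe_iff]
  set g : X → ℝ := fun y => Real.log (φ m y + ε)
  have hψ : ∀ y, 0 < φ m y + ε := fun y => add_pos_of_nonneg_of_pos (hnn m y hm) hε
  have hg : ∀ y, -|Real.log ε| ≤ g y := fun y =>
    (neg_abs_le _).trans (Real.log_le_log hε (le_add_of_nonneg_left (hnn m y hm)))
  obtain ⟨k, hkn, hnk⟩ := Nat.exists_mul_add_le_and_le_mul_add hm hmn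
  have hlog : m * Real.log (φ n x)
      ≤ 2 * m * m * Real.log M + ∑ i ∈ range (k * m), g (T^[i] x) := by
    have := Real.log_le_log (pow_pos hx m) <| pow_le_pow_mul_prod_of_submultiplicative hsub hnn
      hM hM1 hm hkn hnk (ψ := fun y => φ m y + ε) (fun y => le_add_of_nonneg_right hε.le) x
    rw [Real.log_pow, Real.log_mul (by positivity) (prod_pos fun i _ => hψ _).ne',
      Real.log_pow, Real.log_prod fun i _ => (hψ _).ne'] at this
    exact_mod_cast this
  have htail : ∑ i ∈ range (k * m), g (T^[i] x) ≤ birkhoffSum T g n x + 2 * m * |Real.log ε| := by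
    obtain ⟨r, rfl⟩ : ∃ r, n = k * m + r := ⟨n - k * m, by omega⟩
    have hr : (r : ℝ) ≤ 2 * m := by exact_mod_cast (by omega : r ≤ 2 * m)
    have := card_nsmul_le_sum (range r) (fun i => g (T^[k * m + i] x)) _ fun i _ => hg _
    rw [card_range, nsmul_eq_mul] at this
    rw [birkhoffSum, sum_range_add]
    nlinarith [abs_nonneg (Real.log ε)]
  have hm0 : (0 : ℝ) < m := by exact_mod_cast hm
  rw [div_add' _ _ _ hm0.ne', le_div_iff₀ hm0]
  linarith

end Submultiplicative

noncomputable def birkhoffAverageMeasure {X : Type*} [MeasurableSpace X] (T : X → X)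
    (ν : Measure X) (n : ℕ) : Measure X :=
  (n : ℝ≥0∞)⁻¹ • ∑ j ∈ Finset.range n, ν.map (T^[j])

section Compact

variable {X : Type*} [TopologicalSpace X] [CompactSpace X] [MeasurableSpace X]
  [OpensMeasurableSpace X]

theorem Continuous.integrable_of_compactSpace {g : X → ℝ} (hg : Continuous g) (μ : Measure X)
    [IsFiniteMeasure μ] : Integrable g μ :=
  hg.integrable_of_hasCompactSupport (.of_compactSpace g)

theorem integral_birkhoffAverageMeasure {T : X → X} (hT : Measurable T) (ν : Measure X)
    [IsFiniteMeasure ν] (n : ℕ) {g : X → ℝ} (hg : Continuous g) :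
    ∫ x, g x ∂birkhoffAverageMeasure T ν n = (n : ℝ)⁻¹ * ∫ x, birkhoffSum T g n x ∂ν := by
  have hTj : ∀ j, AEMeasurable (T^[j]) ν := fun j => (hT.iterate j).aemeasurable
  rw [birkhoffAverageMeasure, integral_smul_measure,
    integral_finsetSum_measure fun j _ => hg.integrable_of_compactSpace _,
    ENNReal.toReal_inv, ENNReal.toReal_natCast, smul_eq_mul]
  simp only [birkhoffSum]
  rw [integral_finsetSum (f := fun i x => g (T^[i] x)) _ fun j _ =>
    (integrable_map_measure hg.aestronglyMeasurable (hTj j)).1 (hg.integrable_of_compactSpace _)]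
  simp_rw [integral_map (hTj _) hg.aestronglyMeasurable]

end Compact

section Metric

variable {X : Type*} [MetricSpace X] [CompactSpace X] [MeasurableSpace X] [BorelSpace X]

theorem norm_integral_comp_sub_integral_birkhoffAverageMeasure_le {T : X → X}
    (hT : Continuous T) (ν : Measure X) [IsProbabilityMeasure ν] (n : ℕ) {f : X → ℝ}
    (hf : Continuous f) {C : ℝ} (hC : ∀ x, ‖f x‖ ≤ C) :
    ‖∫ x, f (T x) ∂birkhoffAverageMeasure T ν n - ∫ x, f x ∂birkhoffAverageMeasure T ν n‖
      ≤ 2 * C / n := by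
  have hsum : Continuous (birkhoffSum T f n) :=
    continuous_finsetSum _ fun k _ => hf.comp (hT.iterate k)
  have hcomm : ∀ x, birkhoffSum T (fun y => f (T y)) n x = birkhoffSum T f n (T x) := fun x => by
    simp only [birkhoffSum, ← Function.iterate_succ_apply' T, Function.iterate_succ_apply]
  rw [integral_birkhoffAverageMeasure hT.measurable ν n (g := fun x => f (T x)) (hf.comp hT),
    integral_birkhoffAverageMeasure hT.measurable ν n hf, ← mul_sub]
  simp_rw [hcomm]
  rw [← integral_sub (f := fun x => birkhoffSum T f n (T x))
    ((hsum.comp hT).integrable_of_compactSpace _) (hsum.integrable_of_compactSpace _)]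
  simp_rw [birkhoffSum_apply_sub_birkhoffSum]
  rw [norm_mul, norm_inv, Real.norm_natCast, div_eq_inv_mul]
  gcongr
  simpa [two_mul] using norm_integral_le_of_norm_le_const (μ := ν)
    (ae_of_all _ fun x => (norm_sub_le (f (T^[n] x)) (f x)).trans (add_le_add (hC _) (hC _)))

theorem map_eq_of_tendsto_integral_birkhoffAverageMeasure {T : X → X} (hT : Continuous T)
    (ν : ℕ → ProbabilityMeasure X) (μ : Measure X) [IsFiniteMeasure μ] {n : ℕ → ℕ}
    (hn : Tendsto n atTop atTop)
    (hconv : ∀ f : X → ℝ, Continuous f → Tendsto (fun i =>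
      ∫ x, f x ∂birkhoffAverageMeasure T (ν i) (n i)) atTop (𝓝 (∫ x, f x ∂μ))) :
    μ.map T = μ := by
  refine ext_of_forall_integral_eq_of_IsFiniteMeasure fun f => ?_
  rw [integral_map hT.aemeasurable f.continuous.aestronglyMeasurable]
  have hdiff : Tendsto (fun i => ∫ x, f (T x) ∂birkhoffAverageMeasure T (ν i) (n i)
      - ∫ x, f x ∂birkhoffAverageMeasure T (ν i) (n i)) atTop (𝓝 0) :=
    squeeze_zero_norm (fun i => norm_integral_comp_sub_integral_birkhoffAverageMeasure_le hT
        (ν i) (n i) f.continuous f.norm_coe_le_norm)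
      (tendsto_const_nhds.div_atTop (tendsto_natCast_atTop_atTop.comp hn))
  exact sub_eq_zero.1 <|
    tendsto_nhds_unique ((hconv _ (f.continuous.comp hT)).sub (hconv f f.continuous)) hdiff

theorem eint_elog_div_le_integral_birkhoffAverageMeasure {T : X → X} (hT : Continuous T)
    {φ : ℕ → X → ℝ}
    (hsub : ∀ m n : ℕ, 1 ≤ m → 1 ≤ n → ∀ x, φ (n + m) x ≤ φ n x * φ m (T^[n] x))
    (hnn : ∀ n x, 1 ≤ n → 0 ≤ φ n x) {M : ℝ} (hM : ∀ x, φ 1 x ≤ M) (hM1 : 1 ≤ M)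
    (ν : Measure X) [IsProbabilityMeasure ν] {m n : ℕ} (hm : 1 ≤ m) (hmn : m ≤ n)
    (hφm : Continuous (φ m)) {ε : ℝ} (hε : 0 < ε) :
    eint ν (fun x => elog (φ n x)) / (n : EReal)
      ≤ (((∫ x, Real.log (φ m x + ε) ∂birkhoffAverageMeasure T ν n) / m
        + (2 * m * Real.log M + 2 * |Real.log ε|) / n : ℝ) : EReal) := by
  set g : X → ℝ := fun y => Real.log (φ m y + ε)
  set C := 2 * m * Real.log M + 2 * |Real.log ε|
  have hg : Continuous g :=
    (hφm.add continuous_const).log fun y => (add_pos_of_nonneg_of_pos (hnn m y hm) hε).ne'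
  have hsum : Continuous (birkhoffSum T g n) :=
    continuous_finsetSum _ fun k _ => hg.comp (hT.iterate k)
  have hn : (0 : ℝ) < n := by exact_mod_cast (by omega : 0 < n)
  have hnE : (0 : EReal) < n := by exact_mod_cast (by omega : 0 < n)
  rw [EReal.div_le_iff_le_mul hnE (EReal.natCast_ne_top n), ← EReal.coe_coe_eq_natCast,
    ← EReal.coe_mul]
  calc eint ν (fun x => elog (φ n x))
      ≤ eint ν (fun x => ((birkhoffSum T g n x / m + C : ℝ) : EReal)) :=
        eint_mono fun x => elog_le_birkhoffSum_log_add hsub hnn hM hM1 hm hmn hε x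
    _ = ((∫ x, (birkhoffSum T g n x / m + C) ∂ν : ℝ) : EReal) :=
        eint_coe (((hsum.div_const _).add continuous_const).integrable_of_compactSpace ν)
    _ = ((n * ((∫ x, g x ∂birkhoffAverageMeasure T ν n) / m + C / n) : ℝ) : EReal) := by
      rw [integral_add ((hsum.div_const _).integrable_of_compactSpace ν) (integrable_const C),
        integral_div, integral_const, integral_birkhoffAverageMeasure hT.measurable ν n hg]
      field_simp
      simp

theorem limsup_eint_elog_div_le {T : X → X} (hT : Continuous T) {φ : ℕ → X → ℝ}
    (hφ : SubadditivePotential T φ) (ν : ℕ → ProbabilityMeasure X) (μ : Measure X)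
    [IsFiniteMeasure μ] {n : ℕ → ℕ} (hn : Tendsto n atTop atTop)
    (hconv : ∀ f : X → ℝ, Continuous f → Tendsto (fun i =>
      ∫ x, f x ∂birkhoffAverageMeasure T (ν i) (n i)) atTop (𝓝 (∫ x, f x ∂μ)))
    {m : ℕ} (hm : 1 ≤ m) {ε : ℝ} (hε : 0 < ε) :
    limsup (fun i => eint (ν i : Measure X) (fun x => elog (φ (n i) x)) / (n i : EReal)) atTop
      ≤ eint μ (fun x => elog (φ m x + ε)) / m := by
  obtain ⟨hφc, hnn, hsub⟩ := hφ
  obtain ⟨M, hM⟩ := (isCompact_range (hφc 1 le_rfl)).bddAbove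
  set g : X → ℝ := fun y => Real.log (φ m y + ε)
  have hpos : ∀ y, 0 < φ m y + ε := fun y => add_pos_of_nonneg_of_pos (hnn m y hm) hε
  have hg : Continuous g := ((hφc m hm).add continuous_const).log fun y => (hpos y).ne'
  set C := 2 * m * Real.log (max M 1) + 2 * |Real.log ε|
  have hlim : Tendsto (fun i => (∫ x, g x ∂birkhoffAverageMeasure T (ν i) (n i)) / m + C / n i)
      atTop (𝓝 ((∫ x, g x ∂μ) / m)) := by
    simpa using ((hconv g hg).div_const _).add
      (tendsto_const_nhds.div_atTop (tendsto_natCast_atTop_atTop.comp hn))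
  have hμ : eint μ (fun x => elog (φ m x + ε)) / m = (((∫ x, g x ∂μ) / m : ℝ) : EReal) := by
    simp_rw [elog_of_pos (hpos _)]
    rw [eint_coe (hg.integrable_of_compactSpace μ), EReal.coe_div, EReal.coe_coe_eq_natCast]
  rw [hμ, ← (EReal.tendsto_coe.2 hlim).limsup_eq]
  refine limsup_le_limsup ((hn.eventually_ge_atTop m).mono fun i hi => ?_)
  exact eint_elog_div_le_integral_birkhoffAverageMeasure hT hsub hnn
    (fun x => (hM ⟨x, rfl⟩).trans (le_max_left M 1)) (le_max_right M 1) _ hm hi (hφc m hm) hε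

end Metric

/-- Cao–Feng–Huang, Lemma 2.3: if μₙ = (1/n) Σ_{i<n} νₙ ∘ T⁻ⁱ and
μ_{nᵢ} → μ weakly-*, then μ is T-invariant and
limsup (1/nᵢ) ∫ log φ_{nᵢ} dν_{nᵢ} ≤ χ(μ,Φ). -/
theorem limsup_le_lyapunov_of_weak_star_limit
    {X : Type*} [MetricSpace X] [CompactSpace X]
    [MeasurableSpace X] [BorelSpace X]
    (T : X → X) (hT : Continuous T)
    (φ : ℕ → X → ℝ) (hφ : SubadditivePotential T φ)
    (ν : ℕ → ProbabilityMeasure X)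
    (μ : Measure X) [IsProbabilityMeasure μ]
    (ns : ℕ → ℕ) (hns : StrictMono ns)
    (hconv : ∀ f : X → ℝ, Continuous f →
      Tendsto (fun i : ℕ =>
          ∫ x, f x ∂(((ns i : ℝ≥0∞))⁻¹ •
            ∑ j ∈ Finset.range (ns i), Measure.map (T^[j]) (ν (ns i) : Measure X)))
        atTop (𝓝 (∫ x, f x ∂μ)))
    (χ : EReal)
    (hχ : Tendsto (fun n : ℕ => eint μ (fun x => elog (φ n x)) / (n : EReal)) atTop (𝓝 χ)) :
    Measure.map T μ = μ ∧
      Filter.limsup (fun i : ℕ =>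
          eint (ν (ns i) : Measure X) (fun x => elog (φ (ns i) x)) / ((ns i : ℕ) : EReal))
        atTop ≤ χ := by
  refine ⟨map_eq_of_tendsto_integral_birkhoffAverageMeasure hT (fun i => ν (ns i)) μ
    hns.tendsto_atTop hconv, ge_of_tendsto hχ (eventually_atTop.2 ⟨1, fun m hm => ?_⟩)⟩
  have hm0 : (0 : EReal) < m := by exact_mod_cast hm
  rw [EReal.le_div_iff_mul_le hm0 (EReal.natCast_ne_top m)]
  have hε : Tendsto (fun j : ℕ => 1 / ((j : ℝ) + 1)) atTop (𝓝 0) :=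
    tendsto_one_div_add_atTop_nhds_zero_nat
  refine ge_of_tendsto (tendsto_eint_elog_add ((hφ.1 m hm).integrable_of_compactSpace μ)
    (fun i j hij => by gcongr) hε) (Eventually.of_forall fun j => ?_)
  exact (EReal.le_div_iff_mul_le hm0 (EReal.natCast_ne_top m)).1 <|
    limsup_eint_elog_div_le hT hφ (fun i => ν (ns i)) μ hns.tendsto_atTop hconv hm
      (by positivity)
end

section
/- Let T be a homeomorphism of a compact metric space satisfying the Anosov closing property, μ an ergodic T-invariant measure, and x a generic point for μ. For each n with d(x,Tⁿx) < ε let pₙ be the periodic point of period n given by the closing property. Then the periodic orbit measures μ_{pₙ} = (1/n)Σ_{j<n} δ_{T^j pₙ} converge weakly-* to μ along a subsequence of times n with d(Tⁿx, x) < ε. -/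
open MeasureTheory Filter Topology Set
open scoped ENNReal

/-- for a homeomorphism with the Anosov closing property, an ergodic
measure μ and a generic point x, the periodic orbit measures of the closing periodic
points pₙ converge weakly-* to μ along the times n with d(x, Tⁿx) < ε. -/
theorem periodic_orbit_measures_tendsto_of_anosov_closing
    {X : Type*} [MetricSpace X] [CompactSpace X]
    [MeasurableSpace X] [BorelSpace X]
    (T : X → X) (hT : IsHomeomorph T)
    -- the Anosov closing property
    (C ε δ : ℝ) (hC : 0 < C) (hε : 0 < ε) (hδ : 0 < δ)
    (hclose : ∀ x : X, ∀ n : ℕ, 0 < n → dist x (T^[n] x) < ε →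
      ∃ p : X, T^[n] p = p ∧ ∀ i ≤ n,
        dist (T^[i] x) (T^[i] p) ≤
          C * Real.exp (-δ * ((min i (n - i) : ℕ) : ℝ)) * dist (T^[n] x) x)
    -- μ is an ergodic T-invariant Borel probability measure
    (μ : Measure X) [IsProbabilityMeasure μ] (hErg : Ergodic T μ)
    -- x is a generic point for μ
    (x : X)
    (hgen : ∀ f : X → ℝ, Continuous f →
      Tendsto (fun n : ℕ => (1 / (n : ℝ)) * ∑ j ∈ Finset.range n, f (T^[j] x))
        atTop (𝓝 (∫ y, f y ∂μ)))
    -- for each n with d(x, Tⁿx) < ε, p n is a closing periodic point of period n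
    (p : ℕ → X)
    (hp : ∀ n : ℕ, 0 < n → dist x (T^[n] x) < ε →
      T^[n] (p n) = p n ∧ ∀ i ≤ n,
        dist (T^[i] x) (T^[i] (p n)) ≤
          C * Real.exp (-δ * ((min i (n - i) : ℕ) : ℝ)) * dist (T^[n] x) x) :
    -- the periodic orbit measures μ_{pₙ} converge weakly-* to μ along those times
    ∀ f : X → ℝ, Continuous f →
      Tendsto (fun n : ℕ => (1 / (n : ℝ)) * ∑ j ∈ Finset.range n, f (T^[j] (p n)))
        (atTop ⊓ 𝓟 {n : ℕ | 0 < n ∧ dist x (T^[n] x) < ε}) (𝓝 (∫ y, f y ∂μ)) := by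
  intro f hf
  set L := atTop ⊓ 𝓟 {n : ℕ | 0 < n ∧ dist x (T^[n] x) < ε} with hL
  set I := ∫ y, f y ∂μ with hI
  have hA : Tendsto (fun n : ℕ => (1 / (n : ℝ)) * ∑ j ∈ Finset.range n, f (T^[j] x))
      L (𝓝 I) := (hgen f hf).mono_left inf_le_left
  obtain ⟨B0, hB0⟩ : ∃ B0, ∀ a : X, ‖f a‖ ≤ B0 := by
    obtain ⟨B0, hB0⟩ := (isCompact_univ (X := X)).exists_bound_of_continuousOn hf.continuousOn
    exact ⟨B0, fun a => hB0 a (mem_univ a)⟩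
  have hB0nonneg : 0 ≤ B0 := le_trans (norm_nonneg _) (hB0 x)
  have huc : UniformContinuous f := CompactSpace.uniformContinuous_of_continuous hf
  have key : Tendsto (fun n : ℕ =>
      (1 / (n : ℝ)) * ∑ j ∈ Finset.range n, f (T^[j] (p n))
      - (1 / (n : ℝ)) * ∑ j ∈ Finset.range n, f (T^[j] x)) L (𝓝 0) := by
    rw [NormedAddCommGroup.tendsto_nhds_zero]
    intro η hη
    obtain ⟨r, hr, hfr⟩ := Metric.uniformContinuous_iff.mp huc (η / 2) (by positivity)
    obtain ⟨M, hM⟩ : ∃ M : ℕ, C * Real.exp (-δ * M) * ε < r := by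
      have h0 : Tendsto (fun m : ℕ => (Real.exp (-δ)) ^ m) atTop (𝓝 0) :=
        tendsto_pow_atTop_nhds_zero_of_lt_one (Real.exp_nonneg _)
          (Real.exp_lt_one_iff.mpr (by linarith))
      have h2 := (h0.const_mul C).mul_const ε
      simp only [mul_zero, zero_mul] at h2
      have h3 : Tendsto (fun m : ℕ => C * Real.exp (-δ * m) * ε) atTop (𝓝 0) := by
        convert h2 using 2 with m
        rw [← Real.exp_nat_mul]
        ring_nf
      exact (h3.eventually (gt_mem_nhds hr)).exists
    obtain ⟨N, hN⟩ := exists_nat_ge (8 * M * B0 / η + 1)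
    rw [hL, eventually_inf_principal]
    filter_upwards [eventually_ge_atTop N] with n hn hnS
    obtain ⟨hn0, hdist⟩ := hnS
    obtain ⟨hper, hshadow⟩ := hp n hn0 hdist
    have hnpos : (0 : ℝ) < n := Nat.cast_pos.mpr hn0
    -- per-term bound
    have hterm : ∀ j ∈ Finset.range n,
        ‖f (T^[j] (p n)) - f (T^[j] x)‖ ≤
          η / 2 + (if j < M ∨ n - M ≤ j then 2 * B0 else 0) := by
      intro j hj
      by_cases hbad : j < M ∨ n - M ≤ j
      · simp only [hbad, if_true]
        calc ‖f (T^[j] (p n)) - f (T^[j] x)‖ ≤ ‖f (T^[j] (p n))‖ + ‖f (T^[j] x)‖ :=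
              norm_sub_le _ _
          _ ≤ η / 2 + 2 * B0 := by
              have h1 := hB0 (T^[j] (p n)); have h2 := hB0 (T^[j] x); linarith
      · simp only [hbad, if_false, add_zero]
        push_neg at hbad
        obtain ⟨hjM, hjn⟩ := hbad
        have hjle : j ≤ n := le_of_lt (Finset.mem_range.mp hj)
        have hmin : (M : ℝ) ≤ ((min j (n - j) : ℕ) : ℝ) := by
          have h1 : M ≤ min j (n - j) := le_min hjM (by omega)
          exact_mod_cast h1
        have hdx : dist (T^[n] x) x < ε := by rwa [dist_comm]
        have hd2 : dist (T^[j] x) (T^[j] (p n)) < r :=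
          calc dist (T^[j] x) (T^[j] (p n))
              ≤ C * Real.exp (-δ * ((min j (n - j) : ℕ) : ℝ)) * dist (T^[n] x) x :=
                hshadow j hjle
            _ ≤ C * Real.exp (-δ * M) * dist (T^[n] x) x := by
                apply mul_le_mul_of_nonneg_right _ dist_nonneg
                apply mul_le_mul_of_nonneg_left _ hC.le
                apply Real.exp_le_exp.mpr
                nlinarith
            _ ≤ C * Real.exp (-δ * M) * ε := by
                apply mul_le_mul_of_nonneg_left hdx.le
                positivity
            _ < r := hM
        have h4 : dist (T^[j] (p n)) (T^[j] x) < r := by rwa [dist_comm] at hd2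
        have h5 := hfr h4
        rw [dist_eq_norm] at h5
        exact h5.le
    -- cardinality of bad indices
    have hcard : ((Finset.range n).filter (fun j => j < M ∨ n - M ≤ j)).card ≤ 2 * M := by
      have hsub : (Finset.range n).filter (fun j => j < M ∨ n - M ≤ j) ⊆
          Finset.range M ∪ Finset.Ico (n - M) n := by
        intro j hj
        simp only [Finset.mem_filter, Finset.mem_range] at hj
        simp only [Finset.mem_union, Finset.mem_range, Finset.mem_Ico]
        omega
      calc ((Finset.range n).filter (fun j => j < M ∨ n - M ≤ j)).card
          ≤ (Finset.range M ∪ Finset.Ico (n - M) n).card := Finset.card_le_card hsub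
        _ ≤ (Finset.range M).card + (Finset.Ico (n - M) n).card := Finset.card_union_le _ _
        _ ≤ 2 * M := by rw [Finset.card_range, Nat.card_Ico]; omega
    -- sum bound
    have hsum : ∑ j ∈ Finset.range n, ‖f (T^[j] (p n)) - f (T^[j] x)‖ ≤
        n * (η / 2) + 2 * M * (2 * B0) := by
      calc ∑ j ∈ Finset.range n, ‖f (T^[j] (p n)) - f (T^[j] x)‖
          ≤ ∑ j ∈ Finset.range n, (η / 2 + (if j < M ∨ n - M ≤ j then 2 * B0 else 0)) :=
            Finset.sum_le_sum hterm
        _ = n * (η / 2) +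
            ∑ j ∈ Finset.range n, (if j < M ∨ n - M ≤ j then 2 * B0 else 0) := by
            rw [Finset.sum_add_distrib, Finset.sum_const, Finset.card_range,
              nsmul_eq_mul]
        _ ≤ n * (η / 2) + 2 * M * (2 * B0) := by
            have := Finset.sum_filter (s := Finset.range n)
              (p := fun j => j < M ∨ n - M ≤ j) (f := fun _ : ℕ => (2 * B0 : ℝ))
            rw [← this, Finset.sum_const, nsmul_eq_mul]
            have hc : (((Finset.range n).filter (fun j => j < M ∨ n - M ≤ j)).card : ℝ)
                ≤ (2 * M : ℕ) := Nat.cast_le.mpr hcard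
            push_cast at hc ⊢
            nlinarith
    have h8 : 8 * (M : ℝ) * B0 < η * n := by
      have h1 : 8 * (M : ℝ) * B0 / η + 1 ≤ (n : ℝ) :=
        le_trans hN (Nat.cast_le.mpr hn)
      have h2 : 8 * (M : ℝ) * B0 / η < n := by linarith
      rw [div_lt_iff₀ hη] at h2; linarith
    calc ‖(1 / (n : ℝ)) * ∑ j ∈ Finset.range n, f (T^[j] (p n))
          - (1 / (n : ℝ)) * ∑ j ∈ Finset.range n, f (T^[j] x)‖
        = (1 / (n : ℝ)) * ‖∑ j ∈ Finset.range n,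
            (f (T^[j] (p n)) - f (T^[j] x))‖ := by
          rw [← mul_sub, ← Finset.sum_sub_distrib, norm_mul,
            Real.norm_of_nonneg (by positivity)]
      _ ≤ (1 / (n : ℝ)) * ∑ j ∈ Finset.range n, ‖f (T^[j] (p n)) - f (T^[j] x)‖ := by
          apply mul_le_mul_of_nonneg_left (norm_sum_le _ _) (by positivity)
      _ ≤ (1 / (n : ℝ)) * (n * (η / 2) + 2 * M * (2 * B0)) := by
          apply mul_le_mul_of_nonneg_left hsum (by positivity)
      _ = η / 2 + 4 * M * B0 / n := by field_simp; ring
      _ < η := by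
          have : 4 * (M : ℝ) * B0 / n < η / 2 := by
            rw [div_lt_iff₀ hnpos]; linarith
          linarith
  have := hA.add key
  simpa using this
end
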